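/- arXiv:1501.02688 — 4 statements merged into one kernel-verified Lean document; each statement's English description precedes it below -/
import Mathlib

section
/- If a topological group G is Steinhaus with exponent n, then every group homomorphism from G to any separable topological group H is continuous. -/
open Pointwise Topology

/-- A topological group `G` is Steinhaus with exponent `n` if for every symmetric `W ⊆ G`
such that countably many left translates of `W` cover `G`, the power `Wⁿ` contains a
neighborhood of the identity. -/
def Steinhaus (G : Type*) [Group G] [TopologicalSpace G] (n : ℕ) : Prop :=
  ∀ W : Set G, W⁻¹ = W → (∃ g : ℕ → G, (⋃ i, g i • W) = Set.univ) →
    W ^ n ∈ 𝓝 (1 : G)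

/-!
Given a neighbourhood `U` of `1` in `H`, choose a symmetric neighbourhood `V` with
`(V * V) ^ n ⊆ U`. The translates `dᵢ V` by a dense sequence `dᵢ` cover `H`; picking `gᵢ ∈ G`
with `φ gᵢ ∈ dᵢ V` whenever possible, the translates `gᵢ W` of the symmetric set
`W = φ⁻¹' (V⁻¹ * V)` cover `G`. The Steinhaus property then makes `Wⁿ ⊆ φ⁻¹' U` a neighbourhood
of `1`.
-/

theorem exists_mem_nhds_one_pow_subset {M : Type*} [Monoid M] [TopologicalSpace M]
    [ContinuousMul M] (k : ℕ) {U : Set M} (hU : U ∈ 𝓝 1) :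
    ∃ V ∈ 𝓝 (1 : M), V ^ k ⊆ U := by
  induction k generalizing U with
  | zero => exact ⟨Set.univ, Filter.univ_mem, by simpa using mem_of_mem_nhds hU⟩
  | succ k ih =>
    obtain ⟨A, hA, hAU⟩ := exists_nhds_one_split hU
    obtain ⟨B, hB, hBA⟩ := ih hA
    refine ⟨A ∩ B, Filter.inter_mem hA hB, ?_⟩
    rintro _ ⟨x, hx, y, hy, rfl⟩
    exact hAU x (hBA (Set.pow_subset_pow_left Set.inter_subset_right hx)) y hy.1

theorem exists_iUnion_smul_preimage_inv_mul_eq_univ {G H : Type*} [Group G] [Group H]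
    [TopologicalSpace H] [IsTopologicalGroup H] [TopologicalSpace.SeparableSpace H]
    (φ : G →* H) {V : Set H} (hV : V ∈ 𝓝 1) :
    ∃ g : ℕ → G, ⋃ i, g i • φ ⁻¹' (V⁻¹ * V) = Set.univ := by
  set d := TopologicalSpace.denseSeq H
  have hmem (x : G) : ∃ i, (d i)⁻¹ * φ x ∈ V := by
    have hnhds : (fun y => y⁻¹ * φ x) ⁻¹' V ∈ 𝓝 (φ x) :=
      (continuous_inv.mul continuous_const).tendsto' (φ x) 1 (inv_mul_cancel _) hV
    obtain ⟨_, ⟨i, rfl⟩, hi⟩ :=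
      (TopologicalSpace.denseRange_denseSeq H).inter_nhds_nonempty hnhds
    exact ⟨i, hi⟩
  have hpick (i : ℕ) : ∃ y : G, ∀ x : G, (d i)⁻¹ * φ x ∈ V → (d i)⁻¹ * φ y ∈ V := by
    by_cases h : ∃ x, (d i)⁻¹ * φ x ∈ V
    · exact ⟨h.choose, fun _ _ => h.choose_spec⟩
    · exact ⟨1, fun x hx => (h ⟨x, hx⟩).elim⟩
  choose g hg using hpick
  refine ⟨g, Set.eq_univ_of_forall fun x => Set.mem_iUnion.2 ?_⟩
  obtain ⟨i, hi⟩ := hmem x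
  refine ⟨i, (g i)⁻¹ * x, ?_, by simp⟩
  have hφ : φ ((g i)⁻¹ * x) = ((d i)⁻¹ * φ (g i))⁻¹ * ((d i)⁻¹ * φ x) := by
    rw [map_mul, map_inv]; group
  rw [Set.mem_preimage, hφ]
  exact Set.mul_mem_mul (Set.inv_mem_inv.2 (hg i x hi)) hi

/-- A Steinhaus topological group has automatic continuity: every homomorphism to a
separable topological group is continuous. -/
theorem stmt2 {G H : Type*} [Group G] [TopologicalSpace G] [IsTopologicalGroup G]
    [Group H] [TopologicalSpace H] [IsTopologicalGroup H]
    [TopologicalSpace.SeparableSpace H] (n : ℕ) (hS : Steinhaus G n)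
    (φ : G →* H) : Continuous φ := by
  refine continuous_of_continuousAt_one φ fun U hU => ?_
  rw [map_one] at hU
  obtain ⟨N, hN, hNU⟩ := exists_mem_nhds_one_pow_subset n hU
  obtain ⟨V, hV, -, hVinv, hVN⟩ := exists_closed_nhds_one_inv_eq_mul_subset hN
  obtain ⟨g, hg⟩ := exists_iUnion_smul_preimage_inv_mul_eq_univ φ hV
  rw [hVinv] at hg
  have hsymm : (φ ⁻¹' (V * V))⁻¹ = φ ⁻¹' (V * V) := by
    ext x
    rw [Set.mem_inv, Set.mem_preimage, Set.mem_preimage, map_inv, ← Set.mem_inv,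
      mul_inv_rev, hVinv]
  refine Filter.mem_map.2 <| Filter.mem_of_superset (hS _ hsymm ⟨g, hg⟩) ?_
  calc (φ ⁻¹' (V * V)) ^ n ⊆ φ ⁻¹' ((V * V) ^ n) := Set.preimage_pow_subset φ _ n
    _ ⊆ φ ⁻¹' U := Set.preimage_mono ((Set.pow_subset_pow_left hVN).trans hNU)
end

section
/- Let G be a group, and let a, b, w_a, w_b be elements of a group of bijections of a set X such that, for sets B'' ⊆ B' ⊆ B, we have supp(a), supp(b) ⊆ B'', w_a restricted to B'' equals a with supp(w_a) ⊆ B', and w_b restricted to B' equals b with supp(w_b) ⊆ B. Then [a,b] = [w_a, w_b]. -/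
/-- The commutator trick: if `a, b` are bijections supported in `B''`, `w_a` agrees with `a`
on `B''` and is supported in `B'`, `w_b` agrees with `b` on `B'` and is supported in `B`,
where `B'' ⊆ B' ⊆ B`, then `[a,b] = [w_a, w_b]`. -/
theorem stmt10 {X : Type*} (a b wa wb : Equiv.Perm X) (B'' B' B : Set X)
    (h1 : B'' ⊆ B') (h2 : B' ⊆ B)
    (hsa : ∀ x, a x ≠ x → x ∈ B'') (hsb : ∀ x, b x ≠ x → x ∈ B'')
    (hwa1 : ∀ x ∈ B'', wa x = a x) (hwa2 : ∀ x, wa x ≠ x → x ∈ B')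
    (hwb1 : ∀ x ∈ B', wb x = b x) (hwb2 : ∀ x, wb x ≠ x → x ∈ B) :
    a * b * a⁻¹ * b⁻¹ = wa * wb * wa⁻¹ * wb⁻¹ := by
  -- closure facts
  have ha : ∀ x ∈ B'', a x ∈ B'' := by
    intro x hx
    by_cases h : a x = x
    · rwa [h]
    · exact hsa _ (fun h2 => h (a.injective h2))
  have hainv : ∀ x ∈ B'', a⁻¹ x ∈ B'' := by
    intro x hx
    by_cases h : a⁻¹ x = x
    · rwa [h]
    · exact hsa _ (by rw [Equiv.Perm.eq_inv_iff_eq.mp rfl]; exact Ne.symm h)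
  have hb : ∀ x ∈ B'', b x ∈ B'' := by
    intro x hx
    by_cases h : b x = x
    · rwa [h]
    · exact hsb _ (fun h2 => h (b.injective h2))
  have hbinv : ∀ x ∈ B'', b⁻¹ x ∈ B'' := by
    intro x hx
    by_cases h : b⁻¹ x = x
    · rwa [h]
    · exact hsb _ (by rw [Equiv.Perm.eq_inv_iff_eq.mp rfl]; exact Ne.symm h)
  have hafix : ∀ x, x ∉ B'' → a x = x := fun x hx => by
    by_contra h; exact hx (hsa _ h)
  have hbfix : ∀ x, x ∉ B'' → b x = x := fun x hx => by
    by_contra h; exact hx (hsb _ h)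
  have hwafix : ∀ x, x ∉ B' → wa x = x := fun x hx => by
    by_contra h; exact hx (hwa2 _ h)
  have hwainv : ∀ x ∈ B'', wa⁻¹ x = a⁻¹ x := by
    intro x hx
    apply wa.injective
    rw [Equiv.Perm.eq_inv_iff_eq.mp rfl, hwa1 _ (hainv x hx), Equiv.Perm.eq_inv_iff_eq.mp rfl]
  have hb' : ∀ x ∈ B', b x ∈ B' := by
    intro x hx
    by_cases h : b x = x
    · rwa [h]
    · exact h1 (hsb _ (fun h2 => h (b.injective h2)))
  have hb'inv : ∀ x ∈ B', b⁻¹ x ∈ B' := by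
    intro x hx
    by_cases h : b⁻¹ x = x
    · rwa [h]
    · exact h1 (hsb _ (by rw [Equiv.Perm.eq_inv_iff_eq.mp rfl]; exact Ne.symm h))
  have hwa' : ∀ x ∈ B', wa x ∈ B' := by
    intro x hx
    by_cases h : wa x = x
    · rwa [h]
    · exact hwa2 _ (fun h2 => h (wa.injective h2))
  have hwbinv : ∀ x ∈ B', wb⁻¹ x = b⁻¹ x := by
    intro x hx
    apply wb.injective
    rw [Equiv.Perm.eq_inv_iff_eq.mp rfl, hwb1 _ (hb'inv x hx), Equiv.Perm.eq_inv_iff_eq.mp rfl]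
  have hwbinv_in' : ∀ x ∈ B', wb⁻¹ x ∈ B' := by
    intro x hx; rw [hwbinv x hx]; exact hb'inv x hx
  have hwainv_out : ∀ x, x ∉ B'' → wa⁻¹ x ∉ B'' := by
    intro x hx hy
    apply hx
    have hxx : wa (wa⁻¹ x) = x := ((Equiv.Perm.eq_inv_iff_eq (f := wa) (y := x)).mp rfl)
    rw [hwa1 _ hy] at hxx
    rw [← hxx]; exact ha _ hy
  have hwbinv_out'' : ∀ x, x ∉ B'' → wb⁻¹ x ∉ B'' := by
    intro x hx hy
    apply hx
    have hxx : wb (wb⁻¹ x) = x := ((Equiv.Perm.eq_inv_iff_eq (f := wb) (y := x)).mp rfl)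
    rw [hwb1 _ (h1 hy)] at hxx
    rw [← hxx]; exact hb _ hy
  ext x
  simp only [Equiv.Perm.coe_mul, Function.comp_apply]
  by_cases hx : x ∈ B''
  · have h1x : b⁻¹ x ∈ B'' := hbinv x hx
    have h2x : a⁻¹ (b⁻¹ x) ∈ B'' := hainv _ h1x
    have h3x : b (a⁻¹ (b⁻¹ x)) ∈ B'' := hb _ h2x
    rw [hwbinv x (h1 hx), hwainv _ h1x, hwb1 _ (h1 h2x), hwa1 _ h3x]
  · have hL : a (b (a⁻¹ (b⁻¹ x))) = x := by
      have e1 : b⁻¹ x = x := by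
        by_contra h
        exact hx (hsb x (fun h2 => h (b.injective (by rw [Equiv.Perm.eq_inv_iff_eq.mp rfl, h2]))))
      have e2 : a⁻¹ x = x := by
        by_contra h
        exact hx (hsa x (fun h2 => h (a.injective (by rw [Equiv.Perm.eq_inv_iff_eq.mp rfl, h2]))))
      rw [e1, e2, hbfix x hx, hafix x hx]
    rw [hL]
    set y := wb⁻¹ x with hy
    have hyB'' : y ∉ B'' := hwbinv_out'' x hx
    have hxy : wb y = x := ((Equiv.Perm.eq_inv_iff_eq (f := wb) (y := x)).mp rfl)
    by_cases hyB' : y ∈ B'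
    · have hxeqy : x = y := by rw [← hxy, hwb1 _ hyB', hbfix y hyB'']
      set z := wa⁻¹ y with hz
      have hzB'' : z ∉ B'' := hwainv_out y hyB''
      have hzy : wa z = y := ((Equiv.Perm.eq_inv_iff_eq (f := wa) (y := y)).mp rfl)
      have hzB' : z ∈ B' := by
        by_cases h : z = y
        · rwa [h]
        · exact hwa2 z (by rw [hzy]; exact fun h2 => h h2.symm)
      rw [hwb1 _ hzB', hbfix z hzB'', hzy, ← hxeqy]
    · have hzz : wa⁻¹ y = y := by
        by_contra h
        have hv : wa⁻¹ y ∈ B' := hwa2 _ (by rw [Equiv.Perm.eq_inv_iff_eq.mp rfl]; exact Ne.symm h)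
        exact hyB' (((Equiv.Perm.eq_inv_iff_eq (f := wa) (y := y)).mp rfl) ▸ hwa' _ hv)
      rw [hzz, hxy]
      have hxB' : x ∉ B' := fun h => hyB' (hwbinv_in' x h)
      exact (hwafix x hxB').symm
end

section
/- Let f : ℝⁿ → ℝⁿ be a homeomorphism fixing 0 that contracts the standard basis: f(2⁻ⁿB) ⊆ r_n·B with 2⁻ⁿ⁻¹ < r_n < 2⁻ⁿ for each n ≥ 0. Let λ : [0,∞) → [0,∞) be an increasing homeomorphism with λ(2⁻ⁿ) = r_n and λ(r_n) = 2⁻ⁿ⁻¹, and define b(x) = λ(‖x‖)·x/‖x‖ (and b(0)=0). Then b f b⁻¹ f maps 2⁻ⁿB into 2⁻ⁿ⁻¹B for all n, so b f b⁻¹ f is a local contraction. -/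
open Metric Set

section RadialMap

variable {E : Type*} [NormedAddCommGroup E] [NormedSpace ℝ E] {lam : ℝ → ℝ}

lemma StrictMonoOn.nonneg_of_map_zero (hlam0 : lam 0 = 0) (hmono : StrictMonoOn lam (Ici 0))
    {t : ℝ} (ht : 0 ≤ t) : 0 ≤ lam t :=
  hlam0 ▸ hmono.monotoneOn self_mem_Ici ht ht

lemma norm_radialMap_apply {b : E → E} (hnonneg : ∀ t, 0 ≤ t → 0 ≤ lam t)
    (hlam0 : lam 0 = 0) (hb : ∀ x, x ≠ 0 → b x = (lam ‖x‖ / ‖x‖) • x) (hb0 : b 0 = 0) (x : E) :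
    ‖b x‖ = lam ‖x‖ := by
  rcases eq_or_ne x 0 with rfl | hx
  · simp [hb0, hlam0]
  · rw [hb x hx, norm_smul, Real.norm_of_nonneg (div_nonneg (hnonneg _ (norm_nonneg x))
      (norm_nonneg x)), div_mul_cancel₀ _ (norm_ne_zero_iff.mpr hx)]

lemma image_closedBall_radialMap {b : E → E} (hsurj : Function.Surjective b)
    (hlam0 : lam 0 = 0) (hmono : StrictMonoOn lam (Ici 0))
    (hb : ∀ x, x ≠ 0 → b x = (lam ‖x‖ / ‖x‖) • x) (hb0 : b 0 = 0) {ρ : ℝ} (hρ : 0 ≤ ρ) :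
    b '' closedBall 0 ρ = closedBall 0 (lam ρ) := by
  have hnorm := norm_radialMap_apply (fun _ ↦ hmono.nonneg_of_map_zero hlam0) hlam0 hb hb0
  have hle : ∀ x : E, ‖b x‖ ≤ lam ρ ↔ ‖x‖ ≤ ρ := fun x ↦ by
    rw [hnorm]; exact hmono.le_iff_le (norm_nonneg x) hρ
  ext y
  obtain ⟨x, rfl⟩ := hsurj y
  simp only [mem_image, mem_closedBall_zero_iff, hle]
  exact ⟨fun ⟨z, hz, hzx⟩ ↦ (hle x).1 (hzx ▸ (hle z).2 hz), fun hx ↦ ⟨x, hx, rfl⟩⟩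

end RadialMap

theorem stmt16_general (n : ℕ)
    (f b : EuclideanSpace ℝ (Fin n) ≃ₜ EuclideanSpace ℝ (Fin n))
    (r : ℕ → ℝ) (lam : ℝ → ℝ)
    (hf : ∀ k : ℕ, ⇑f '' closedBall (0 : EuclideanSpace ℝ (Fin n)) ((2 : ℝ)⁻¹ ^ k) ⊆
      closedBall 0 (r k))
    (hlam0 : lam 0 = 0) (hmono : StrictMonoOn lam (Set.Ici (0 : ℝ)))
    (hlam1 : ∀ k : ℕ, lam ((2 : ℝ)⁻¹ ^ k) = r k)
    (hlam2 : ∀ k : ℕ, lam (r k) = (2 : ℝ)⁻¹ ^ (k + 1))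
    (hb : ∀ x : EuclideanSpace ℝ (Fin n), x ≠ 0 → b x = (lam ‖x‖ / ‖x‖) • x)
    (hb0 : b 0 = 0) :
    ∀ k : ℕ, (⇑b ∘ ⇑f ∘ ⇑b.symm ∘ ⇑f) ''
        closedBall (0 : EuclideanSpace ℝ (Fin n)) ((2 : ℝ)⁻¹ ^ k) ⊆
      closedBall 0 ((2 : ℝ)⁻¹ ^ (k + 1)) := by
  intro k
  have hbB : ∀ ρ, 0 ≤ ρ → b '' closedBall 0 ρ = closedBall 0 (lam ρ) := fun _ ↦
    image_closedBall_radialMap b.surjective hlam0 hmono hb hb0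
  have h2k : (0 : ℝ) ≤ 2⁻¹ ^ k := by positivity
  have hrk : 0 ≤ r k := hlam1 k ▸ hmono.nonneg_of_map_zero hlam0 h2k
  have hbinv : b.symm '' closedBall 0 (r k) = closedBall 0 (2⁻¹ ^ k) := by
    rw [← hlam1, ← hbB _ h2k]; exact b.toEquiv.symm_image_image _
  simp only [image_comp]
  calc b '' (f '' (b.symm '' (f '' closedBall 0 (2⁻¹ ^ k))))
      ⊆ b '' (f '' (b.symm '' closedBall 0 (r k))) := by gcongr; exact hf k
    _ = b '' (f '' closedBall 0 (2⁻¹ ^ k)) := by rw [hbinv]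
    _ ⊆ b '' closedBall 0 (r k) := image_mono (hf k)
    _ = closedBall 0 (2⁻¹ ^ (k + 1)) := by rw [hbB _ hrk, hlam2]

/-- If `f` contracts the standard basis of balls (`f(2⁻ⁿB) ⊆ rₙB` with
`2⁻ⁿ⁻¹ < rₙ < 2⁻ⁿ`), and `b` is the radial homeomorphism induced by an increasing `λ` with
`λ(2⁻ⁿ) = rₙ` and `λ(rₙ) = 2⁻ⁿ⁻¹`, then `b f b⁻¹ f` maps `2⁻ⁿB` into `2⁻ⁿ⁻¹B` for all `n`,
hence is a local contraction. -/
theorem stmt16 (n : ℕ)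
    (f b : EuclideanSpace ℝ (Fin n) ≃ₜ EuclideanSpace ℝ (Fin n))
    (r : ℕ → ℝ) (lam : ℝ → ℝ)
    (hf0 : f 0 = 0)
    (hr : ∀ k : ℕ, (2 : ℝ)⁻¹ ^ (k + 1) < r k ∧ r k < (2 : ℝ)⁻¹ ^ k)
    (hf : ∀ k : ℕ, ⇑f '' closedBall (0 : EuclideanSpace ℝ (Fin n)) ((2 : ℝ)⁻¹ ^ k) ⊆
      closedBall 0 (r k))
    (hlam0 : lam 0 = 0) (hmono : StrictMonoOn lam (Set.Ici (0 : ℝ)))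
    (hlam1 : ∀ k : ℕ, lam ((2 : ℝ)⁻¹ ^ k) = r k)
    (hlam2 : ∀ k : ℕ, lam (r k) = (2 : ℝ)⁻¹ ^ (k + 1))
    (hb : ∀ x : EuclideanSpace ℝ (Fin n), x ≠ 0 → b x = (lam ‖x‖ / ‖x‖) • x)
    (hb0 : b 0 = 0) :
    ∀ k : ℕ, (⇑b ∘ ⇑f ∘ ⇑b.symm ∘ ⇑f) ''
        closedBall (0 : EuclideanSpace ℝ (Fin n)) ((2 : ℝ)⁻¹ ^ k) ⊆
      closedBall 0 ((2 : ℝ)⁻¹ ^ (k + 1)) :=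
  stmt16_general n f b r lam hf hlam0 hmono hlam1 hlam2 hb hb0
end

section
/- Let G be a group and suppose every nontrivial element's conjugates generate products realizing local contractions in the following quantified sense: (1) any two elements of a distinguished conjugacy-invariant subset C ⊆ G ('local contractions') are conjugate; (2) for every nontrivial g ∈ G there exist a, b ∈ G with b(aga⁻¹g)b⁻¹(aga⁻¹g) ∈ C; (3) for every g' ∈ G there exists c ∈ C with cg' ∈ C. Then G is uniformly simple: every element of G is a product of at most 8 conjugates of any fixed nontrivial element g (counting conjugates of g and of g⁻¹). -/
/-- Abstract uniform simplicity scheme: if `C ⊆ G` is a conjugation-invariant set of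
"local contractions" such that (1) any two elements of `C` are conjugate, (2) for every
nontrivial `g` there are `a, b` with `b(aga⁻¹g)b⁻¹(aga⁻¹g) ∈ C`, and (3) for every `g'`
there is `c ∈ C` with `cg' ∈ C`, then `G` is uniformly simple: every `g'` is a product of
8 conjugates of any fixed nontrivial `g` (allowing conjugates of `g` and of `g⁻¹`). -/
theorem stmt17 {G : Type*} [Group G] (C : Set G)
    (hCconj : ∀ c ∈ C, ∀ h : G, h * c * h⁻¹ ∈ C)
    (hconj : ∀ c ∈ C, ∀ c' ∈ C, IsConj c c')
    (hcontr : ∀ g : G, g ≠ 1 → ∃ a b : G,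
      b * (a * g * a⁻¹ * g) * b⁻¹ * (a * g * a⁻¹ * g) ∈ C)
    (habs : ∀ g' : G, ∃ c ∈ C, c * g' ∈ C) :
    ∀ g : G, g ≠ 1 → ∀ g' : G, ∃ l : List G, l.length = 8 ∧
      (∀ y ∈ l, ∃ t : G, y = t * g * t⁻¹ ∨ y = t * g⁻¹ * t⁻¹) ∧ g' = l.prod := by
  intro g hg g'
  obtain ⟨a, b, hw⟩ := hcontr g hg
  set w := b * (a * g * a⁻¹ * g) * b⁻¹ * (a * g * a⁻¹ * g) with hwdef
  obtain ⟨c, hc, hcg⟩ := habs g'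
  obtain ⟨t, ht⟩ := (isConj_iff).1 (hconj w hw c hc)
  obtain ⟨s, hs⟩ := (isConj_iff).1 (hconj w hw (c * g') hcg)
  refine ⟨[t * g⁻¹ * t⁻¹, (t * a) * g⁻¹ * (t * a)⁻¹, (t * b) * g⁻¹ * (t * b)⁻¹,
      (t * b * a) * g⁻¹ * (t * b * a)⁻¹,
      (s * b * a) * g * (s * b * a)⁻¹, (s * b) * g * (s * b)⁻¹,
      (s * a) * g * (s * a)⁻¹, s * g * s⁻¹], rfl, ?_, ?_⟩
  · intro y hy
    simp only [List.mem_cons, List.not_mem_nil, or_false] at hy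
    rcases hy with h|h|h|h|h|h|h|h
    exacts [⟨t, Or.inr h⟩, ⟨t * a, Or.inr h⟩, ⟨t * b, Or.inr h⟩, ⟨t * b * a, Or.inr h⟩,
      ⟨s * b * a, Or.inl h⟩, ⟨s * b, Or.inl h⟩, ⟨s * a, Or.inl h⟩, ⟨s, Or.inl h⟩]
  · have : g' = (t * w * t⁻¹)⁻¹ * (s * w * s⁻¹) := by rw [ht, hs]; group
    rw [this, hwdef]
    simp only [List.prod_cons, List.prod_nil]
    group
end
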